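/- The Waldschmidt constant of the edge ideal I = I(G_{n,r}) equals n/(n - (r + 1)), i.e., the limit of α(I^{(t)})/t as t → ∞ is n/(n-(r+1)). -/

import Mathlib

open MvPolynomial

/-- The graph `G_{n,r}`: vertices `x_1,…,x_n` in cyclic order (indexed by `ZMod n`),
where for `i < j` the vertices `x_i, x_j` are adjacent iff `r+1 ≤ j-i ≤ n-(r+1)`. -/
def Gnr (n r : ℕ) : SimpleGraph (ZMod n) :=
  SimpleGraph.fromRel (fun i j => r + 1 ≤ j.val - i.val ∧ j.val - i.val ≤ n - (r + 1))

/-- A vertex cover (as a finite set of vertices): meets every edge. -/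
def IsVertexCover {V : Type*} (G : SimpleGraph V) (C : Finset V) : Prop :=
  ∀ ⦃a b : V⦄, G.Adj a b → a ∈ C ∨ b ∈ C

/-- A minimal vertex cover. -/
def IsMinVertexCover {V : Type*} (G : SimpleGraph V) (C : Finset V) : Prop :=
  IsVertexCover G C ∧ ∀ D ⊆ C, IsVertexCover G D → D = C

/-- The edge ideal `I(G) = (x_i x_j : {x_i,x_j} ∈ E(G))` of a graph. -/
noncomputable def edgeIdeal (k : Type*) [Field k] {V : Type*} (G : SimpleGraph V) :
    Ideal (MvPolynomial V k) :=
  Ideal.span {p | ∃ i j : V, G.Adj i j ∧ p = X i * X j}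

/-- The monomial prime ideal generated by the variables of a vertex set `C`. -/
noncomputable def coverPrime (k : Type*) [Field k] {V : Type*} (C : Finset V) :
    Ideal (MvPolynomial V k) :=
  Ideal.span ((fun i => (X i : MvPolynomial V k)) '' ↑C)

/-- The `t`-th symbolic power of the edge ideal of `G`: the intersection of the `t`-th
powers of the monomial primes corresponding to the minimal vertex covers of `G`. -/
noncomputable def symbPow (k : Type*) [Field k] {V : Type*} (G : SimpleGraph V) (t : ℕ) :
    Ideal (MvPolynomial V k) :=
  ⨅ (C : Finset V) (_ : IsMinVertexCover G C), (coverPrime k C) ^ t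

/-- `α(J)`: the least total degree of a nonzero element of `J`. -/
noncomputable def minDeg {k : Type*} [Field k] {V : Type*} (J : Ideal (MvPolynomial V k)) : ℕ :=
  sInf {d : ℕ | ∃ p ∈ J, p ≠ 0 ∧ p.totalDegree = d}

/-! The minimal vertex covers of `G_{n,r}` include the `n` complements of the arcs
`{a, a+1, …, a+r}`, and every vertex lies in exactly `n-(r+1)` of them. Every monomial of an
element of `I^{(t)}` has degree at least `t` on each of these covers; adding up the `n` inequalities
gives `n t ≤ (n-(r+1)) α(I^{(t)})`.

Conversely, two vertices of an independent set of `G_{n,r}` are at cyclic distance at most `r`,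
which forces it to have at most `r+1` vertices; so every minimal vertex cover has at least
`n-(r+1)` vertices, and `(x_1 ⋯ x_n)^s ∈ I^{(t)}` as soon as `t ≤ (n-(r+1)) s`. Taking
`s = ⌊t/(n-(r+1))⌋ + 1` squeezes `α(I^{(t)})/t` to `n/(n-(r+1))`. -/

open Finset

namespace ZMod

variable {n : ℕ} [NeZero n]

theorem val_sub_swap {u v : ZMod n} (h : u ≠ v) : (u - v).val = n - (v - u).val := by
  rw [← neg_sub, neg_val, if_neg (sub_ne_zero.mpr h.symm)]

theorem card_filter_lt_val (r : ℕ) : #{b : ZMod n | r < b.val} = n - (r + 1) := by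
  obtain ⟨m, rfl⟩ := Nat.exists_eq_succ_of_ne_zero (NeZero.ne n)
  have hlt : #{b : Fin (m + 1) | b.val < r + 1} = min (m + 1) (r + 1) := Fin.card_filter_val_lt
  have := card_filter_add_card_filter_not (s := (univ : Finset (Fin (m + 1)))) (· < r + 1)
  simp only [card_univ, Fintype.card_fin, not_lt, Nat.add_one_le_iff] at this
  change #{b : Fin (m + 1) | r < b.val} = _
  omega

end ZMod

section VertexCover

variable {V : Type*} {G : SimpleGraph V}

theorem IsVertexCover.isIndepSet_compl [Fintype V] [DecidableEq V] {C : Finset V}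
    (hC : IsVertexCover G C) : G.IsIndepSet ↑Cᶜ := by
  intro u hu v hv _ huv
  rw [coe_compl, Set.mem_compl_iff, mem_coe] at hu hv
  exact (hC huv).elim hu hv

theorem IsVertexCover.card_sub_le_card [Fintype V] [DecidableEq V] {m : ℕ}
    (hG : ∀ S : Finset V, G.IsIndepSet ↑S → #S ≤ m) {C : Finset V} (hC : IsVertexCover G C) :
    Fintype.card V - m ≤ #C := by
  have := hG _ hC.isIndepSet_compl
  rw [card_compl] at this
  omega

theorem isMinVertexCover_of_forall_exists_adj {C : Finset V} (hC : IsVertexCover G C)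
    (h : ∀ v ∈ C, ∃ w ∉ C, G.Adj v w) : IsMinVertexCover G C := by
  refine ⟨hC, fun D hDC hD => hDC.antisymm fun v hv => ?_⟩
  obtain ⟨w, hw, hvw⟩ := h v hv
  exact (hD hvw).resolve_right fun hwD => hw (hDC hwD)

end VertexCover

namespace Gnr

variable {n r : ℕ} [NeZero n]

theorem adj_iff {u v : ZMod n} : (Gnr n r).Adj u v ↔ r < (v - u).val ∧ r < (u - v).val := by
  wlog huv : u.val ≤ v.val generalizing u v
  · rw [SimpleGraph.adj_comm, this (by omega), and_comm]
  rcases huv.eq_or_lt with h | h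
  · simp [ZMod.val_injective n h]
  have hne : u ≠ v := fun h' => h.ne (congrArg ZMod.val h')
  rw [Gnr, SimpleGraph.fromRel_adj, ZMod.val_sub_swap hne, ZMod.val_sub huv]
  have := ZMod.val_lt v
  simp only [ne_eq, hne, not_false_eq_true, true_and]
  omega

theorem card_le_of_isIndepSet (hn : 2 * r + 2 ≤ n) {S : Finset (ZMod n)}
    (hS : (Gnr n r).IsIndepSet ↑S) : #S ≤ r + 1 := by
  obtain rfl | ⟨x, hx⟩ := S.eq_empty_or_nonempty
  · simp
  have hnadj : ∀ y ∈ S, (y - x).val ≤ r ∨ (x - y).val ≤ r := fun y hy => by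
    by_cases hxy : x = y
    · simp [hxy]
    have : ¬(Gnr n r).Adj x y := hS hx hy hxy
    rw [adj_iff] at this
    omega
  -- Vertices just after `x` go to their distance from `x`, those just before to `r + 1` minus
  -- it; the two kinds cannot collide, since vertices at distance `r + 1` are adjacent.
  let φ : ZMod n → ℕ := fun y => if (y - x).val ≤ r then (y - x).val else r + 1 - (x - y).val
  have hmixed : ∀ y ∈ S, ∀ z ∈ S, (y - x).val ≤ r → (x - z).val ≤ r →
      (y - x).val + (x - z).val ≠ r + 1 := by
    intro y hy z hz _ _ hsum
    have hyz : (y - z).val = r + 1 := by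
      rw [← sub_add_sub_cancel y x z, ZMod.val_add_of_lt (by omega), hsum]
    have hne : y ≠ z := fun h => by simp [h] at hyz
    apply hS hy hz hne
    rw [adj_iff, ZMod.val_sub_swap hne.symm, hyz]
    omega
  calc #S ≤ #(range (r + 1)) := card_le_card_of_injOn φ ?_ ?_
    _ = r + 1 := card_range _
  · intro y hy
    have hxy : (x - y).val = 0 → (y - x).val = 0 := by
      simp only [ZMod.val_eq_zero, sub_eq_zero]; exact Eq.symm
    simp only [coe_range, Set.mem_Iio, φ]
    split_ifs <;> omega
  · intro y hy z hz hφ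
    have h1 := hmixed y hy z hz
    have h2 := hmixed z hz y hy
    have hy' := hnadj y hy
    have hz' := hnadj z hz
    simp only [φ] at hφ
    have key : (y - x).val = (z - x).val ∨ (x - y).val = (x - z).val := by
      split_ifs at hφ <;> omega
    rcases key with h | h
    · simpa using ZMod.val_injective n h
    · simpa using ZMod.val_injective n h

def arcCover (n r : ℕ) [NeZero n] (a : ZMod n) : Finset (ZMod n) :=
  {i | r < (i - a).val}

theorem mem_arcCover {a i : ZMod n} : i ∈ arcCover n r a ↔ r < (i - a).val := by
  simp [arcCover]

theorem isMinVertexCover_arcCover (hn : 2 * r + 2 ≤ n) (a : ZMod n) :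
    IsMinVertexCover (Gnr n r) (arcCover n r a) := by
  refine isMinVertexCover_of_forall_exists_adj (fun u v huv => ?_) fun v hv => ?_
  · wlog hle : (u - a).val ≤ (v - a).val generalizing u v
    · exact (this v u huv.symm (by omega)).symm
    by_contra! h
    rw [mem_arcCover, mem_arcCover, not_lt, not_lt] at h
    have hvu : (v - u).val ≤ r := by
      rw [← sub_sub_sub_cancel_right v u a, ZMod.val_sub hle]
      omega
    exact absurd (adj_iff.mp huv).1 (not_lt.mpr hvu)
  rw [mem_arcCover] at hv
  have hva : v ≠ a := by rintro rfl; simp at hv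
  have hd := ZMod.val_lt (v - a)
  by_cases hfar : r < n - (v - a).val
  · refine ⟨a, by simp [mem_arcCover], adj_iff.mpr ⟨?_, hv⟩⟩
    rwa [ZMod.val_sub_swap hva.symm]
  -- otherwise `v + (r + 1)` lies in the arc `{a, …, a + r}`
  have hr1 : ((r + 1 : ℕ) : ZMod n).val = r + 1 := ZMod.val_natCast_of_lt (by omega)
  refine ⟨v + (r + 1 : ℕ), ?_, adj_iff.mpr ⟨?_, ?_⟩⟩
  · rw [mem_arcCover, not_lt, add_sub_right_comm, ZMod.val_add, hr1,
      Nat.mod_eq_sub_mod (by omega), Nat.mod_eq_of_lt (by omega)]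
    omega
  · rw [add_sub_cancel_left, hr1]
    omega
  · rw [sub_add_cancel_left, ZMod.neg_val, if_neg, hr1]
    · omega
    · rw [← ZMod.val_eq_zero, hr1]
      omega

theorem card_filter_mem_arcCover (i : ZMod n) : #{a | i ∈ arcCover n r a} = n - (r + 1) := by
  rw [← ZMod.card_filter_lt_val r]
  refine card_nbij' (i - ·) (i - ·) ?_ ?_ ?_ ?_ <;> intro a ha <;> simp_all [mem_arcCover]

theorem sub_le_card_of_isMinVertexCover (hn : 2 * r + 2 ≤ n) {C : Finset (ZMod n)}
    (hC : IsMinVertexCover (Gnr n r) C) : n - (r + 1) ≤ #C := by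
  simpa using hC.1.card_sub_le_card fun S hS => card_le_of_isIndepSet hn hS

end Gnr

section SymbolicPower

variable {R : Type*} [CommSemiring R] {k : Type*} [Field k] {V : Type*}

noncomputable def coverDegreeIdeal (R : Type*) [CommSemiring R] {V : Type*} (C : Finset V)
    (t : ℕ) : Ideal (MvPolynomial V R) where
  carrier := {p | ∀ m ∈ p.support, t ≤ ∑ i ∈ C, m i}
  zero_mem' := by simp
  add_mem' := by
    classical
    intro p q hp hq m hm
    exact (mem_union.mp (support_add hm)).elim (hp m) (hq m)
  smul_mem' := by
    classical
    intro c p hp m hm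
    obtain ⟨m₁, -, m₂, hm₂, rfl⟩ := mem_add.mp (support_mul _ _ hm)
    simpa [sum_add_distrib] using (hp m₂ hm₂).trans (Nat.le_add_left _ _)

theorem coverDegreeIdeal_mul_le (C : Finset V) (s t : ℕ) :
    coverDegreeIdeal R C s * coverDegreeIdeal R C t ≤ coverDegreeIdeal R C (s + t) := by
  classical
  refine Ideal.mul_le.mpr fun p hp q hq m hm => ?_
  obtain ⟨m₁, hm₁, m₂, hm₂, rfl⟩ := mem_add.mp (support_mul _ _ hm)
  simpa [sum_add_distrib] using add_le_add (hp m₁ hm₁) (hq m₂ hm₂)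

theorem coverPrime_le_coverDegreeIdeal (C : Finset V) :
    coverPrime k C ≤ coverDegreeIdeal k C 1 := by
  classical
  rw [coverPrime, Ideal.span_le]
  rintro _ ⟨i, hi, rfl⟩ m hm
  rw [support_X, mem_singleton] at hm
  simp [hm, Finsupp.single_apply, mem_coe.mp hi]

theorem coverPrime_pow_le_coverDegreeIdeal (C : Finset V) (t : ℕ) :
    coverPrime k C ^ t ≤ coverDegreeIdeal k C t := by
  induction t with
  | zero => intro p _ m _; simp
  | succ t ih =>
    rw [pow_succ]
    exact (Ideal.mul_mono ih (coverPrime_le_coverDegreeIdeal C)).trans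
      (coverDegreeIdeal_mul_le C t 1)

theorem le_sum_of_mem_symbPow {G : SimpleGraph V} {C : Finset V} (hC : IsMinVertexCover G C)
    {t : ℕ} {p : MvPolynomial V k} (hp : p ∈ symbPow k G t) {m : V →₀ ℕ} (hm : m ∈ p.support) :
    t ≤ ∑ i ∈ C, m i := by
  have hle : symbPow k G t ≤ coverPrime k C ^ t := iInf₂_le C hC
  exact coverPrime_pow_le_coverDegreeIdeal C t (hle hp) m hm

theorem card_mul_le_mul_totalDegree_of_mem_symbPow [Fintype V] [DecidableEq V]
    {G : SimpleGraph V} {ι : Type*} [Fintype ι] (C : ι → Finset V)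
    (hC : ∀ a, IsMinVertexCover G (C a)) {e : ℕ}
    (he : ∀ i, #{a | i ∈ C a} ≤ e) {t : ℕ} {p : MvPolynomial V k} (hp : p ∈ symbPow k G t)
    (hp0 : p ≠ 0) : Fintype.card ι * t ≤ e * p.totalDegree := by
  obtain ⟨m, hm⟩ := support_nonempty.mpr hp0
  calc Fintype.card ι * t = ∑ _a : ι, t := by simp
    _ ≤ ∑ a, ∑ i ∈ C a, m i := sum_le_sum fun a _ => le_sum_of_mem_symbPow (hC a) hp hm
    _ = ∑ i, #{a | i ∈ C a} * m i := by
      rw [sum_comm' (t' := univ) (s' := fun i => {a | i ∈ C a}) (by simp)]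
      simp
    _ ≤ ∑ i, e * m i := sum_le_sum fun i _ => Nat.mul_le_mul_right _ (he i)
    _ = e * Finsupp.degree m := by rw [Finsupp.degree_eq_sum, mul_sum]
    _ ≤ e * p.totalDegree := Nat.mul_le_mul_left e (le_totalDegree hm)

theorem prod_X_pow_mem_symbPow [Fintype V] {G : SimpleGraph V} {e : ℕ}
    (hG : ∀ C, IsMinVertexCover G C → e ≤ #C) {s t : ℕ} (ht : t ≤ e * s) :
    (∏ i, X i) ^ s ∈ symbPow k G t := by
  classical
  simp only [symbPow, Submodule.mem_iInf]
  intro C hC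
  have hprod : ∏ i, (X i : MvPolynomial V k) ∈ coverPrime k C ^ #C := by
    rw [← prod_mul_prod_compl C, ← prod_const]
    exact Ideal.mul_mem_right _ _
      (Ideal.prod_mem_prod fun i hi => Ideal.subset_span ⟨i, hi, rfl⟩)
  have hpow := Ideal.pow_mem_pow hprod s
  rw [← pow_mul] at hpow
  exact Ideal.pow_le_pow_right (ht.trans (Nat.mul_le_mul_right s (hG C hC))) hpow

theorem totalDegree_prod_X_pow_le [Nontrivial R] [Fintype V] (s : ℕ) :
    ((∏ i, X i : MvPolynomial V R) ^ s).totalDegree ≤ Fintype.card V * s := by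
  calc _ ≤ s * (∏ i, X i : MvPolynomial V R).totalDegree := totalDegree_pow _ _
    _ ≤ s * ∑ i : V, (X i : MvPolynomial V R).totalDegree :=
      Nat.mul_le_mul_left s (totalDegree_finsetProd _ _)
    _ = Fintype.card V * s := by simp [mul_comm]

end SymbolicPower

theorem Gnr.mul_le_mul_totalDegree_of_mem_symbPow {k : Type*} [Field k] {n r : ℕ} [NeZero n]
    (hn : 2 * r + 2 ≤ n) {t : ℕ} {p : MvPolynomial (ZMod n) k} (hp : p ∈ symbPow k (Gnr n r) t)
    (hp0 : p ≠ 0) : n * t ≤ (n - (r + 1)) * p.totalDegree := by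
  simpa using card_mul_le_mul_totalDegree_of_mem_symbPow (Gnr.arcCover n r)
    (Gnr.isMinVertexCover_arcCover hn) (fun i => (Gnr.card_filter_mem_arcCover i).le) hp hp0

section MinDeg

variable {k : Type*} [Field k] {V : Type*} {J : Ideal (MvPolynomial V k)}

theorem minDeg_le {p : MvPolynomial V k} (hp : p ∈ J) (hp0 : p ≠ 0) : minDeg J ≤ p.totalDegree :=
  Nat.sInf_le ⟨p, hp, hp0, rfl⟩

theorem exists_totalDegree_eq_minDeg {p : MvPolynomial V k} (hp : p ∈ J) (hp0 : p ≠ 0) :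
    ∃ q ∈ J, q ≠ 0 ∧ q.totalDegree = minDeg J :=
  Nat.sInf_mem (s := {d | ∃ q ∈ J, q ≠ 0 ∧ q.totalDegree = d}) ⟨_, p, hp, hp0, rfl⟩

end MinDeg

open Filter Topology in
theorem tendsto_div_of_mul_le_of_le_mul_div_add_one {f : ℕ → ℕ} {c e : ℕ} (he : 0 < e)
    (hlow : ∀ t, c * t ≤ e * f t) (hup : ∀ t, f t ≤ c * (t / e + 1)) :
    Tendsto (fun t => (f t : ℝ) / t) atTop (𝓝 (c / e)) := by
  have he' : (0 : ℝ) < e := by exact_mod_cast he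
  have hupper : Tendsto (fun t : ℕ => (c : ℝ) / e + c / t) atTop (𝓝 (c / e)) := by
    simpa using (tendsto_const_div_atTop_nhds_zero_nat (c : ℝ)).const_add ((c : ℝ) / e)
  refine tendsto_of_tendsto_of_tendsto_of_le_of_le' tendsto_const_nhds hupper ?_ ?_ <;>
    filter_upwards [eventually_gt_atTop 0] with t ht <;>
    have ht' : (0 : ℝ) < t := by exact_mod_cast ht
  · rw [div_le_div_iff₀ he' ht']
    exact_mod_cast (mul_comm e (f t)) ▸ hlow t
  · have hdiv : ((t / e : ℕ) : ℝ) ≤ t / e := Nat.cast_div_le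
    have hf : (f t : ℝ) ≤ c * ((t / e : ℕ) + 1) := by exact_mod_cast hup t
    rw [div_le_iff₀ ht', add_mul, div_mul_cancel₀ _ ht'.ne']
    calc (f t : ℝ) ≤ c * (t / e + 1) := hf.trans (by gcongr)
      _ = c / e * t + c := by ring

/-- The Waldschmidt constant of `I = I(G_{n,r})` equals `n/(n-(r+1))`:
`α(I^{(t)})/t → n/(n-(r+1))` as `t → ∞`. -/
theorem stmt13 {k : Type*} [Field k] (n r : ℕ) (hn : 2 ≤ n) (hr : r ≤ n / 2 - 1) :
    Filter.Tendsto (fun t : ℕ => (minDeg (symbPow k (Gnr n r) t) : ℝ) / t)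
      Filter.atTop (nhds ((n : ℝ) / ((n : ℝ) - (r + 1)))) := by
  have hrn : 2 * r + 2 ≤ n := by omega
  have : NeZero n := ⟨by omega⟩
  have hcast : (n : ℝ) - (r + 1) = ((n - (r + 1) : ℕ) : ℝ) := by
    rw [Nat.cast_sub (by omega)]
    push_cast
    ring
  rw [hcast]
  have hmem (t : ℕ) := prod_X_pow_mem_symbPow (k := k) (s := t / (n - (r + 1)) + 1)
    (fun C hC => Gnr.sub_le_card_of_isMinVertexCover hrn hC) (Nat.lt_mul_div_succ t (by omega)).le
  have hne (s : ℕ) : (∏ i, X i : MvPolynomial (ZMod n) k) ^ s ≠ 0 :=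
    pow_ne_zero _ (prod_ne_zero_iff.mpr fun i _ => X_ne_zero i)
  refine tendsto_div_of_mul_le_of_le_mul_div_add_one (by omega) (fun t => ?_) (fun t => ?_)
  · obtain ⟨p, hp, hp0, hdeg⟩ := exists_totalDegree_eq_minDeg (hmem t) (hne _)
    exact hdeg ▸ Gnr.mul_le_mul_totalDegree_of_mem_symbPow hrn hp hp0
  · simpa using (minDeg_le (hmem t) (hne _)).trans (totalDegree_prod_X_pow_le _)
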